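/- For λ ≠ λ' in ℂ, the 5-dimensional Leibniz algebras L(1,0,λ) and L(1,0,λ') are not isomorphic, where L(1,0,λ) has basis e₀,...,e₄ and nonzero products [e₀,e₀]=e₂, [e₂,e₀]=e₃, [e₃,e₀]=e₄, [e₀,e₁]=e₃, [e₁,e₁]=λe₄, [e₂,e₁]=e₄. -/

import Mathlib

/-
An isomorphism `f` sends `e₀, e₁` to vectors `A, B` satisfying the defining relations
`[B, A] = 0` and `[A, B] = [[A, A], A]` of `L(1,0,λ')`. Since `f e₄ = [[A, B], A]` must be nonzero,
`A₀ ≠ 0`, and the relations then force `B₀ = B₂ = 0` and `B₁ = A₀²`. Comparing the `e₄`-coordinates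
of `λ f e₄ = [B, B]` now gives `λ A₀⁴ = λ' A₀⁴`.
-/

/-- The bracket of the algebra `L(1,0,λ)` in `SLeib₅`. -/
def brL10 (l : ℂ) (x y : Fin 5 → ℂ) : Fin 5 → ℂ :=
  ![0, 0,
    x 0 * y 0,
    x 2 * y 0 + x 0 * y 1,
    x 3 * y 0 + l * (x 1 * y 1) + x 2 * y 1]

section

variable (l : ℂ)

theorem brL10_single_zero_single_zero :
    brL10 l (Pi.single 0 1) (Pi.single 0 1) = Pi.single 2 1 := by
  ext k; fin_cases k <;> simp [brL10]

theorem brL10_single_zero_single_one :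
    brL10 l (Pi.single 0 1) (Pi.single 1 1) = Pi.single 3 1 := by
  ext k; fin_cases k <;> simp [brL10]

theorem brL10_single_two_single_zero :
    brL10 l (Pi.single 2 1) (Pi.single 0 1) = Pi.single 3 1 := by
  ext k; fin_cases k <;> simp [brL10]

theorem brL10_single_three_single_zero :
    brL10 l (Pi.single 3 1) (Pi.single 0 1) = Pi.single 4 1 := by
  ext k; fin_cases k <;> simp [brL10]

theorem brL10_single_one_single_zero :
    brL10 l (Pi.single 1 1) (Pi.single 0 1) = 0 := by
  ext k; fin_cases k <;> simp [brL10]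

theorem brL10_single_one_single_one :
    brL10 l (Pi.single 1 1) (Pi.single 1 1) = l • Pi.single 4 1 := by
  ext k; fin_cases k <;> simp [brL10]

variable {l}

theorem brL10_brL10_eq_zero {x y z : Fin 5 → ℂ} (hx : x 0 = 0) (hz : z 0 = 0) :
    brL10 l (brL10 l x y) z = 0 := by
  ext k; fin_cases k <;> simp [brL10, hx, hz]

theorem brL10_coords_of_relations {A B : Fin 5 → ℂ} (hA : A 0 ≠ 0) (hBA : brL10 l B A = 0)
    (hAB : brL10 l A B = brL10 l (brL10 l A A) A) :
    B 0 = 0 ∧ B 1 = A 0 ^ 2 ∧ B 2 = 0 := by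
  have h2 : B 0 * A 0 = 0 := by simpa [brL10] using congrFun hBA 2
  have h3 : B 2 * A 0 + B 0 * A 1 = 0 := by simpa [brL10] using congrFun hBA 3
  have hB0 : B 0 = 0 := (mul_eq_zero.1 h2).resolve_right hA
  have hB2 : B 2 = 0 := by
    rw [hB0, zero_mul, add_zero] at h3
    exact (mul_eq_zero.1 h3).resolve_right hA
  have hAB3 : A 0 * B 1 = A 0 * A 0 ^ 2 := by
    have := congrFun hAB 3
    simp only [brL10, Matrix.cons_val, hB0, mul_zero, zero_add, zero_mul] at this
    linear_combination this
  exact ⟨hB0, mul_left_cancel₀ hA hAB3, hB2⟩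

theorem brL10_apply_four_of_relations {A B : Fin 5 → ℂ} (hA : A 0 ≠ 0)
    (hBA : brL10 l B A = 0) (hAB : brL10 l A B = brL10 l (brL10 l A A) A) :
    brL10 l (brL10 l A B) A 4 = A 0 ^ 4 ∧ brL10 l B B 4 = l * A 0 ^ 4 := by
  obtain ⟨hB0, hB1, hB2⟩ := brL10_coords_of_relations hA hBA hAB
  simp only [brL10, Matrix.cons_val, hB0, hB1, hB2]
  constructor <;> ring

end

/-- For `λ ≠ λ'`, the algebras `L(1,0,λ)` and `L(1,0,λ')` are not isomorphic. -/
theorem L10lambda_not_isomorphic (l l' : ℂ) (h : l ≠ l') :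
    ¬ ∃ f : (Fin 5 → ℂ) ≃ₗ[ℂ] (Fin 5 → ℂ),
        ∀ x y : Fin 5 → ℂ, f (brL10 l x y) = brL10 l' (f x) (f y) := by
  rintro ⟨f, hf⟩
  set A := f (Pi.single 0 1)
  set B := f (Pi.single 1 1)
  have hBA : brL10 l' B A = 0 := by
    rw [← hf, brL10_single_one_single_zero, map_zero]
  have hAB : brL10 l' A B = brL10 l' (brL10 l' A A) A := by
    rw [← hf, ← hf, ← hf, brL10_single_zero_single_zero, brL10_single_zero_single_one,
      brL10_single_two_single_zero]
  have hE4 : f (Pi.single 4 1) = brL10 l' (brL10 l' A B) A := by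
    rw [← hf, ← hf, brL10_single_zero_single_one, brL10_single_three_single_zero]
  have hBB : l • f (Pi.single 4 1) = brL10 l' B B := by
    rw [← hf, brL10_single_one_single_one, map_smul]
  have hA : A 0 ≠ 0 := by
    intro hA
    have : f (Pi.single 4 1) = 0 := by
      rw [hE4, brL10_brL10_eq_zero hA hA]
    simp at this
  obtain ⟨hE4', hBB'⟩ := brL10_apply_four_of_relations hA hBA hAB
  have h4 : l * A 0 ^ 4 = l' * A 0 ^ 4 := by
    rw [← hBB', ← hBB, Pi.smul_apply, hE4, hE4', smul_eq_mul]
  exact h (mul_right_cancel₀ (pow_ne_zero 4 hA) h4)
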